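/- Let v = x_1^{b_1} x_j x_n^{d-b_1-1} ∈ M_d with 1 < j < n, and I = (u ∈ M_d : u ≥_lex v). Then I = Σ_{i=b_1+1}^{d} x_1^i (x_2,...,x_n)^{d-i} + J where J = (w ∈ M_d : deg_{x_1}(w) = b_1 and w ≥_lex v), and I is polymatroidal. -/
import Mathlib


/-- A monomial in `n` variables, given by its exponent vector. -/
abbrev Mon (n : ℕ) := Fin n → ℕ

/-- Total degree of a monomial. -/
def mdeg {n : ℕ} (u : Mon n) : ℕ := ∑ i, u i

/-- The exponent vector of `x_j * (u / x_i)`. -/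
def exch {n : ℕ} (u : Mon n) (i j : Fin n) : Mon n :=
  fun l => u l - (if l = i then 1 else 0) + (if l = j then 1 else 0)

/-- Membership of the monomial `w` in the monomial ideal generated by the set `G`. -/
def memI {n : ℕ} (G : Set (Mon n)) (w : Mon n) : Prop :=
  ∃ u ∈ G, ∀ l, u l ≤ w l

/-- `G` (the set of minimal generators, all of one degree) is polymatroidal: the
exchange property holds. -/
def IsPolymatroidal {n : ℕ} (G : Set (Mon n)) : Prop :=
  ∀ u ∈ G, ∀ v ∈ G, ∀ i, v i < u i → ∃ j, u j < v j ∧ memI G (exch u i j)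

/-- The (strict) lexicographic order on monomials of a common degree, induced by the
variable ordering `x_{σ 0} > x_{σ 1} > ⋯ > x_{σ (n-1)}`. -/
def lexGT {n : ℕ} (σ : Fin n → Fin n) (u v : Mon n) : Prop :=
  ∃ i, v (σ i) < u (σ i) ∧ ∀ k, k < i → u (σ k) = v (σ k)

/-- `u ≥_lex v` with respect to the variable ordering given by `σ`. -/
def lexGE {n : ℕ} (σ : Fin n → Fin n) (u v : Mon n) : Prop :=
  u = v ∨ lexGT σ u v

/-- The (strict) reverse lexicographic order on monomials of a common degree, induced by
the variable ordering `x_{σ 0} > x_{σ 1} > ⋯ > x_{σ (n-1)}`. -/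
def rlexGT {n : ℕ} (σ : Fin n → Fin n) (u v : Mon n) : Prop :=
  ∃ i, u (σ i) < v (σ i) ∧ ∀ k, i < k → u (σ k) = v (σ k)

/-- `G` has linear quotients with respect to the order `gt`: for every `u ∈ G` the colon
ideal `(v ∈ G : gt v u) : u` is generated by variables, i.e. for every `v ∈ G` with
`gt v u` there is a variable `x_i` dividing `v : u` with `x_i·u` in the ideal generated
by the `gt`-larger generators. -/
def LinQuot {n : ℕ} (G : Set (Mon n)) (gt : Mon n → Mon n → Prop) : Prop :=
  ∀ u ∈ G, ∀ v ∈ G, gt v u →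
    ∃ i, u i < v i ∧
      ∃ w ∈ G, gt w u ∧ ∀ l, w l ≤ u l + (if l = i then 1 else 0)

lemma lexGT_asymm {m : ℕ} {u w : Mon m} (h1 : lexGT id u w) (h2 : lexGT id w u) : False := by
  obtain ⟨i1, hi1, ha1⟩ := h1
  obtain ⟨i2, hi2, ha2⟩ := h2
  simp only [id] at *
  rcases lt_trichotomy i1 i2 with h | h | h
  · have := ha2 i1 h; omega
  · subst h; omega
  · have := ha1 i2 h; omega

lemma lexGT_total {m : ℕ} {u w : Mon m} (h : u ≠ w) : lexGT id u w ∨ lexGT id w u := by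
  have hne : (Finset.univ.filter (fun i => u i ≠ w i)).Nonempty := by
    by_contra hc
    rw [Finset.not_nonempty_iff_eq_empty] at hc
    apply h; funext i
    by_contra hui
    have : i ∈ Finset.univ.filter (fun i => u i ≠ w i) := by simp [hui]
    simp [hc] at this
  set S := Finset.univ.filter (fun i => u i ≠ w i) with hS
  have hiS := S.min'_mem hne
  set i := S.min' hne with hi
  have hagree : ∀ k, k < i → u k = w k := by
    intro k hk
    by_contra hc
    have : k ∈ S := by simp [hS, hc]
    have := S.min'_le k this
    omega
  have hne2 : u i ≠ w i := by simpa [hS] using hiS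
  rcases lt_or_gt_of_ne hne2 with h' | h'
  · right; exact ⟨i, h', fun k hk => (hagree k hk).symm⟩
  · left; exact ⟨i, h', hagree⟩

lemma sub_exists {α : Type*} [DecidableEq α] (f : α → ℕ) (s : Finset α) :
    ∀ m : ℕ, m ≤ ∑ a ∈ s, f a →
    ∃ g : α → ℕ, (∀ a, g a ≤ f a) ∧ (∀ a, a ∉ s → g a = 0) ∧ ∑ a ∈ s, g a = m := by
  induction s using Finset.induction_on with
  | empty =>
    intro m hm
    simp only [Finset.sum_empty, Nat.le_zero] at hm
    exact ⟨fun _ => 0, fun _ => Nat.zero_le _, fun _ _ => rfl, by simp [hm]⟩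
  | @insert a s ha ih =>
    intro m hm
    rw [Finset.sum_insert ha] at hm
    obtain ⟨g, hg1, hg2, hg3⟩ := ih (m - min m (f a)) (by
      have h1 := min_le_left m (f a)
      have h2 := min_le_right m (f a)
      omega)
    refine ⟨fun x => if x = a then min m (f a) else g x, ?_, ?_, ?_⟩
    · intro x
      by_cases hx : x = a
      · simp [hx, min_le_right]
      · simp [hx, hg1 x]
    · intro x hx
      rw [Finset.mem_insert] at hx
      push_neg at hx
      simp [hx.1, hg2 x hx.2]
    · rw [Finset.sum_insert ha]
      have heq : ∑ x ∈ s, (if x = a then min m (f a) else g x) = ∑ x ∈ s, g x :=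
        Finset.sum_congr rfl (fun x hx => by
          have : x ≠ a := fun h => ha (h ▸ hx)
          simp [this])
      rw [if_pos rfl, heq, hg3]
      have := min_le_left m (f a)
      omega

lemma exists_lt_on {α : Type*} {s : Finset α} {u w : α → ℕ} {i : α} (hi : i ∈ s)
    (h : w i < u i) (hs : ∑ a ∈ s, u a ≤ ∑ a ∈ s, w a) : ∃ j ∈ s, u j < w j := by
  by_contra hc
  push_neg at hc
  have : ∑ a ∈ s, w a < ∑ a ∈ s, u a := Finset.sum_lt_sum (fun a ha => hc a ha) ⟨i, hi, h⟩
  omega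

lemma le_exch {m : ℕ} (u : Mon m) (i j : Fin m) (l : Fin m) (hl : l ≠ i) :
    u l ≤ exch u i j l := by
  simp only [exch, if_neg hl]
  split <;> omega

lemma exch_at {m : ℕ} (u : Mon m) (i j : Fin m) (h : j ≠ i) : exch u i j j = u j + 1 := by
  simp [exch, if_neg h]

lemma exch_at_i {m : ℕ} (u : Mon m) (i j : Fin m) (h : i ≠ j) : exch u i j i = u i - 1 := by
  simp [exch, h]

lemma exch_other {m : ℕ} (u : Mon m) {i j l : Fin m} (h1 : l ≠ i) (h2 : l ≠ j) :
    exch u i j l = u l := by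
  simp [exch, h1, h2]

lemma mdeg_exch {m : ℕ} {u : Mon m} {i j : Fin m} (hij : j ≠ i) (hu : 1 ≤ u i) :
    mdeg (exch u i j) = mdeg u := by
  unfold mdeg exch
  rw [Finset.sum_add_distrib]
  have h2 : ∑ l : Fin m, (if l = j then 1 else 0) = 1 := by simp
  have h3 : ∑ l : Fin m, (u l - if l = i then 1 else 0)
      = (u i - 1) + ∑ l ∈ Finset.univ.erase i, u l := by
    rw [← Finset.add_sum_erase _ _ (Finset.mem_univ i)]
    simp only [if_pos rfl]
    congr 1
    exact Finset.sum_congr rfl fun l hl => by simp [(Finset.mem_erase.mp hl).1]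
  have h4 : ∑ l : Fin m, u l = u i + ∑ l ∈ Finset.univ.erase i, u l :=
    (Finset.add_sum_erase _ _ (Finset.mem_univ i)).symm
  omega

lemma mdeg_v {n d b₁ : ℕ} (hb : b₁ + 1 ≤ d)
    {j : Fin (n + 2)} (hj0 : j ≠ 0) (hjn : j ≠ Fin.last (n + 1))
    {v : Mon (n + 2)}
    (hv : v = fun l => if l = 0 then b₁ else if l = j then 1
      else if l = Fin.last (n + 1) then d - b₁ - 1 else 0) :
    mdeg v = d := by
  have h0l : (0 : Fin (n + 2)) ≠ Fin.last (n + 1) := by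
    simp [Fin.ext_iff]
  have h0j : (0 : Fin (n + 2)) ≠ j := Ne.symm hj0
  unfold mdeg
  rw [← Finset.sum_subset (Finset.subset_univ ({0, j, Fin.last (n + 1)} : Finset (Fin (n + 2))))
    (by intro x _ hx
        simp only [Finset.mem_insert, Finset.mem_singleton] at hx
        push_neg at hx
        simp [hv, hx.1, hx.2.1, hx.2.2])]
  rw [Finset.sum_insert (by simp [h0j, h0l]), Finset.sum_insert (by simp [hjn]),
    Finset.sum_singleton]
  have hlj : Fin.last (n + 1) ≠ j := Ne.symm hjn
  have hl0 : Fin.last (n + 1) ≠ 0 := Ne.symm h0l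
  rw [show v 0 = b₁ from by simp [hv], show v j = 1 from by simp [hv, hj0],
    show v (Fin.last (n + 1)) = d - b₁ - 1 from by simp [hv, hl0, hlj]]
  omega

lemma charL {n d b₁ : ℕ} (hb : b₁ + 1 ≤ d)
    {j : Fin (n + 2)} (hj0 : j ≠ 0) (hjn : j ≠ Fin.last (n + 1))
    {v : Mon (n + 2)}
    (hv : v = fun l => if l = 0 then b₁ else if l = j then 1
      else if l = Fin.last (n + 1) then d - b₁ - 1 else 0)
    {u : Mon (n + 2)} (hu : mdeg u = d) :
    lexGE id u v ↔ (b₁ < u 0 ∨ (u 0 = b₁ ∧ ∃ k, k ≠ 0 ∧ k ≤ j ∧ 1 ≤ u k)) := by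
  have hmv : mdeg v = d := mdeg_v hb hj0 hjn hv
  have h0l : (0 : Fin (n + 2)) ≠ Fin.last (n + 1) := by simp [Fin.ext_iff]
  have hjlast : j < Fin.last (n + 1) := lt_of_le_of_ne (Fin.le_last j) hjn
  have hv0 : v 0 = b₁ := by simp [hv]
  have hvj : v j = 1 := by simp [hv, hj0]
  have hvo : ∀ l, l ≠ 0 → l ≠ j → l ≠ Fin.last (n + 1) → v l = 0 := by
    intro l h1 h2 h3; simp [hv, h1, h2, h3]
  constructor
  · rintro (h | ⟨i, hi, hagree⟩)
    · right
      refine ⟨by rw [h, hv0], j, hj0, le_refl j, by rw [h, hvj]⟩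
    · simp only [id] at hi hagree
      by_cases hi0 : i = 0
      · subst hi0; left; omega
      · have h0 : u 0 = v 0 := hagree 0 (Fin.pos_of_ne_zero hi0)
        right
        refine ⟨by omega, ?_⟩
        rcases le_or_gt i j with hij | hij
        · exact ⟨i, hi0, hij, by omega⟩
        · refine ⟨j, hj0, le_refl j, ?_⟩
          rw [hagree j hij, hvj]
  · intro h
    by_cases huv : u = v
    · exact Or.inl huv
    rcases lexGT_total huv with hgt | hgt
    · exact Or.inr hgt
    exfalso
    obtain ⟨i, hi, hagree⟩ := hgt
    simp only [id] at hi hagree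
    by_cases hi0 : i = 0
    · subst hi0; rw [hv0] at hi; omega
    have h00 : v 0 = u 0 := hagree 0 (Fin.pos_of_ne_zero hi0)
    rw [hv0] at h00
    have hu0 : u 0 = b₁ := h00.symm
    rcases h with h | ⟨_, k, hk0, hkj, hk1⟩
    · omega
    -- v i > u i ≥ 0, so v i ≥ 1, hence i = j or i = last
    by_cases hij : i = j
    · subst hij
      rw [hvj] at hi
      have hui : u i = 0 := by omega
      have hki : k ≠ i := by intro h; subst h; omega
      have hklt : k < i := lt_of_le_of_ne hkj hki
      have := hagree k hklt
      rw [hvo k hk0 hki (by intro h; subst h; exact absurd (lt_of_le_of_lt hkj hjlast) (lt_irrefl _))] at this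
      omega
    by_cases hil : i = Fin.last (n + 1)
    · subst hil
      have hallk : ∀ l, l ≠ Fin.last (n + 1) → v l = u l :=
        fun l hl => hagree l (lt_of_le_of_ne (Fin.le_last l) hl)
      have hA : mdeg u = u (Fin.last (n + 1)) + ∑ l ∈ Finset.univ.erase (Fin.last (n + 1)), u l :=
        (Finset.add_sum_erase _ _ (Finset.mem_univ _)).symm
      have hB : mdeg v = v (Fin.last (n + 1)) + ∑ l ∈ Finset.univ.erase (Fin.last (n + 1)), v l :=
        (Finset.add_sum_erase _ _ (Finset.mem_univ _)).symm
      have hC : ∑ l ∈ Finset.univ.erase (Fin.last (n + 1)), v l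
          = ∑ l ∈ Finset.univ.erase (Fin.last (n + 1)), u l :=
        Finset.sum_congr rfl fun l hl => hallk l (Finset.mem_erase.mp hl).1
      omega
    · rw [hvo i hi0 hij hil] at hi; omega

/-- For `v = x_1^{b_1} x_j x_n^{d-b_1-1}` with `1 < j < n`, the initial lexsegment ideal
`I = (u ∈ M_d : u ≥_lex v)` equals `Σ_{i=b_1+1}^{d} x_1^i (x_2,…,x_n)^{d-i} + J`,
where `J = (w ∈ M_d : deg_{x_1}(w) = b_1 and w ≥_lex v)`, and `I` is polymatroidal. -/
theorem stmt_17 {n d b₁ : ℕ} (hb : b₁ + 1 ≤ d)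
    (j : Fin (n + 2)) (hj0 : j ≠ 0) (hjn : j ≠ Fin.last (n + 1))
    (v : Mon (n + 2))
    (hv : v = fun l => if l = 0 then b₁ else if l = j then 1
      else if l = Fin.last (n + 1) then d - b₁ - 1 else 0)
    (G : Set (Mon (n + 2))) (hG : G = {u | mdeg u = d ∧ lexGE id u v})
    (J : Set (Mon (n + 2))) (hJ : J = {w | mdeg w = d ∧ w 0 = b₁ ∧ lexGE id w v}) :
    (∀ w : Mon (n + 2), memI G w ↔
        ((∃ i, b₁ + 1 ≤ i ∧ i ≤ d ∧ i ≤ w 0 ∧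
            d - i ≤ ∑ l ∈ Finset.univ.erase 0, w l) ∨ memI J w)) ∧
      IsPolymatroidal G := by
  constructor
  · intro w
    constructor
    · rintro ⟨u, huG, hle⟩
      rw [hG] at huG
      obtain ⟨hud, hulex⟩ := huG
      rcases (charL hb hj0 hjn hv hud).mp hulex with h1 | ⟨h1, _⟩
      · left
        refine ⟨u 0, h1, ?_, hle 0, ?_⟩
        · have : u 0 ≤ mdeg u :=
            Finset.single_le_sum (f := u) (fun i _ => Nat.zero_le _) (Finset.mem_univ 0)
          omega
        · have hA : mdeg u = u 0 + ∑ l ∈ Finset.univ.erase 0, u l :=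
            (Finset.add_sum_erase _ _ (Finset.mem_univ 0)).symm
          have hB : ∑ l ∈ Finset.univ.erase 0, u l ≤ ∑ l ∈ Finset.univ.erase 0, w l :=
            Finset.sum_le_sum fun l _ => hle l
          omega
      · right
        exact ⟨u, by rw [hJ]; exact ⟨hud, h1, hulex⟩, hle⟩
    · rintro (⟨i, hi1, hi2, hi3, hi4⟩ | ⟨u, huJ, hle⟩)
      · obtain ⟨g, hg1, hg2, hg3⟩ := sub_exists w (Finset.univ.erase 0) (d - i) hi4
        have hdeg : mdeg (fun l => if l = 0 then i else g l) = d := by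
          unfold mdeg
          rw [← Finset.add_sum_erase _ _ (Finset.mem_univ 0)]
          have heq : ∑ l ∈ Finset.univ.erase 0, (if l = 0 then i else g l)
              = ∑ l ∈ Finset.univ.erase 0, g l :=
            Finset.sum_congr rfl fun l hl => by rw [if_neg (Finset.mem_erase.mp hl).1]
          rw [heq, hg3, if_pos rfl]
          omega
        refine ⟨fun l => if l = 0 then i else g l, ?_, ?_⟩
        · rw [hG]
          refine ⟨hdeg, (charL hb hj0 hjn hv hdeg).mpr (Or.inl ?_)⟩
          rw [if_pos rfl]; omega
        · intro l
          by_cases hl : l = 0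
          · subst hl; simpa using hi3
          · simpa [hl] using hg1 l
      · refine ⟨u, ?_, hle⟩
        rw [hJ] at huJ
        rw [hG]
        exact ⟨huJ.1, huJ.2.2⟩
  · rw [hG]
    rintro u ⟨hud, hulex⟩ w ⟨hwd, hwlex⟩ i hwi
    have hPu := (charL hb hj0 hjn hv hud).mp hulex
    have hPw := (charL hb hj0 hjn hv hwd).mp hwlex
    have hu0 : b₁ ≤ u 0 := by rcases hPu with h | ⟨h, _⟩ <;> omega
    have hw0 : b₁ ≤ w 0 := by rcases hPw with h | ⟨h, _⟩ <;> omega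
    have hui : 1 ≤ u i := by omega
    have hsum : ∑ a, u a ≤ ∑ a, w a := by unfold mdeg at hud hwd; omega
    have key : ∀ j' : Fin (n + 2), u j' < w j' →
        (b₁ < exch u i j' 0 ∨ (exch u i j' 0 = b₁ ∧ ∃ k, k ≠ 0 ∧ k ≤ j ∧ 1 ≤ exch u i j' k)) →
        ∃ j'', u j'' < w j'' ∧ memI {u | mdeg u = d ∧ lexGE id u v} (exch u i j'') := by
      intro j' hj' hPz
      have hne : j' ≠ i := by intro h; subst h; omega
      have hdz : mdeg (exch u i j') = d := by rw [mdeg_exch hne hui]; exact hud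
      exact ⟨j', hj', exch u i j', ⟨hdz, (charL hb hj0 hjn hv hdz).mpr hPz⟩, fun l => le_refl _⟩
    by_cases hi0 : i = 0
    · subst hi0
      obtain ⟨j', _, hj'⟩ := exists_lt_on (Finset.mem_univ 0) hwi hsum
      have hj'0 : j' ≠ 0 := by intro h; subst h; omega
      by_cases hcase : b₁ + 2 ≤ u 0
      · apply key j' hj'
        left
        rw [exch_at_i u 0 j' (Ne.symm hj'0)]
        omega
      · have hu0e : u 0 = b₁ + 1 := by omega
        have hw0e : w 0 = b₁ := by omega
        have hPw' : ∃ k, k ≠ 0 ∧ k ≤ j ∧ 1 ≤ w k := by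
          rcases hPw with h | ⟨_, h⟩
          · omega
          · exact h
        obtain ⟨k₁, hk₁0, hk₁j, hk₁1⟩ := hPw'
        by_cases hex : ∃ k, k ≠ 0 ∧ k ≤ j ∧ 1 ≤ u k
        · obtain ⟨k, hk0, hkj, hk1⟩ := hex
          apply key j' hj'
          right
          constructor
          · rw [exch_at_i u 0 j' (Ne.symm hj'0)]
            omega
          · refine ⟨k, hk0, hkj, ?_⟩
            have := le_exch u 0 j' k hk0
            omega
        · push_neg at hex
          have huk₁ : u k₁ = 0 := by have := hex k₁ hk₁0 hk₁j; omega
          apply key k₁ (by omega)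
          right
          constructor
          · rw [exch_at_i u 0 k₁ (Ne.symm hk₁0)]
            omega
          · refine ⟨k₁, hk₁0, hk₁j, ?_⟩
            rw [exch_at u 0 k₁ hk₁0]
            omega
    · by_cases hcase : b₁ < u 0
      · obtain ⟨j', _, hj'⟩ := exists_lt_on (Finset.mem_univ i) hwi hsum
        apply key j' hj'
        left
        have := le_exch u i j' 0 (Ne.symm hi0)
        omega
      · have hu0e : u 0 = b₁ := by omega
        have hPu' : ∃ k, k ≠ 0 ∧ k ≤ j ∧ 1 ≤ u k := by
          rcases hPu with h | ⟨_, h⟩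
          · omega
          · exact h
        obtain ⟨k₀, hk₀0, hk₀j, hk₀1⟩ := hPu'
        by_cases hw0' : b₁ < w 0
        · apply key 0 (by omega)
          left
          rw [exch_at u i 0 (Ne.symm hi0)]
          omega
        · have hw0e : w 0 = b₁ := by omega
          have htail : ∑ l ∈ Finset.univ.erase 0, u l ≤ ∑ l ∈ Finset.univ.erase 0, w l := by
            have hA : mdeg u = u 0 + ∑ l ∈ Finset.univ.erase 0, u l :=
              (Finset.add_sum_erase _ _ (Finset.mem_univ 0)).symm
            have hB : mdeg w = w 0 + ∑ l ∈ Finset.univ.erase 0, w l :=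
              (Finset.add_sum_erase _ _ (Finset.mem_univ 0)).symm
            omega
          obtain ⟨j', hj'mem, hj'⟩ :=
            exists_lt_on (Finset.mem_erase.mpr ⟨hi0, Finset.mem_univ i⟩) hwi htail
          have hj'0 : j' ≠ 0 := (Finset.mem_erase.mp hj'mem).1
          have hij' : i ≠ j' := by intro h; subst h; omega
          by_cases hex : ∃ k, k ≠ 0 ∧ k ≤ j ∧ ((k ≠ i ∧ 1 ≤ u k) ∨ (k = i ∧ 2 ≤ u k))
          · obtain ⟨k, hk0, hkj, hk⟩ := hex
            apply key j' hj'
            right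
            refine ⟨by rw [exch_other u (Ne.symm hi0) (Ne.symm hj'0)]; exact hu0e, k, hk0, hkj, ?_⟩
            rcases hk with ⟨hki, hk1⟩ | ⟨hki, hk2⟩
            · have := le_exch u i j' k hki
              omega
            · subst hki
              rw [exch_at_i u k j' hij']
              omega
          · push_neg at hex
            have hk₀i : k₀ = i := by
              by_contra hne
              have := (hex k₀ hk₀0 hk₀j).1 hne
              omega
            subst hk₀i
            have hui1 : u k₀ = 1 := by
              have := (hex k₀ hk₀0 hk₀j).2 rfl
              omega
            have hwi0 : w k₀ = 0 := by omega
            have hPw' : ∃ k, k ≠ 0 ∧ k ≤ j ∧ 1 ≤ w k := by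
              rcases hPw with h | ⟨_, h⟩
              · omega
              · exact h
            obtain ⟨k₁, hk₁0, hk₁j, hk₁1⟩ := hPw'
            have hk₁i : k₁ ≠ k₀ := by intro h; subst h; omega
            have huk₁ : u k₁ = 0 := by
              have := (hex k₁ hk₁0 hk₁j).1 hk₁i
              omega
            apply key k₁ (by omega)
            right
            refine ⟨by rw [exch_other u (Ne.symm hk₀0) (Ne.symm hk₁0)]; exact hu0e,
              k₁, hk₁0, hk₁j, ?_⟩
            rw [exch_at u k₀ k₁ hk₁i]
            omega
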